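/- arXiv:2406.04549 — 4 statements merged into one kernel-verified Lean document; each statement's English description precedes it below -/
import Mathlib

section
/- Fix γ ∈ (0,1). For every θ ∈ (0,1), writing π*(θ) = γθ/(1 + θ(γ−1)) and J(π) = (1−θ)·log((1−θ)/(1−π)) + θ·log(θ/π) + log(1 + (γ−1)(1−π)), it holds that J(π*(θ)) = log γ − θ·log γ = (1−θ)·log γ. Consequently the map θ ↦ J(π*(θ)) is affine in θ with derivative identically equal to −log γ on (0,1). -/
open Set Real

/-! With `d = 1 + θ(γ - 1)`, the minimizer is `π* = γθ/d`, and the three arguments of the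
logarithms in `J(π*)` become `d`, `d/γ` and `γ/d`. The `log d` terms then cancel, since their
weights `1 - θ`, `θ` and `-1` sum to zero, leaving `(1 - θ) log γ`. -/

namespace FlatteningHyperprior

noncomputable def objective (γ θ p : ℝ) : ℝ :=
  (1 - θ) * log ((1 - θ) / (1 - p)) + θ * log (θ / p) + log (1 + (γ - 1) * (1 - p))

noncomputable def minimizer (γ θ : ℝ) : ℝ := γ * θ / (1 + θ * (γ - 1))

variable {γ θ : ℝ}

lemma one_add_mul_sub_one_pos (hγ : 0 < γ) (hθ₀ : 0 ≤ θ) (hθ₁ : θ < 1) :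
    0 < 1 + θ * (γ - 1) := by
  nlinarith [mul_nonneg hθ₀ hγ.le]

lemma one_sub_minimizer (hd : 1 + θ * (γ - 1) ≠ 0) :
    1 - minimizer γ θ = (1 - θ) / (1 + θ * (γ - 1)) := by
  rw [minimizer]
  field_simp
  ring

lemma div_one_sub_minimizer (hθ : θ ≠ 1) (hd : 1 + θ * (γ - 1) ≠ 0) :
    (1 - θ) / (1 - minimizer γ θ) = 1 + θ * (γ - 1) := by
  rw [one_sub_minimizer hd, div_div_cancel₀ (sub_ne_zero.mpr hθ.symm)]

lemma div_minimizer (hθ : θ ≠ 0) :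
    θ / minimizer γ θ = (1 + θ * (γ - 1)) / γ := by
  rw [minimizer, div_div_eq_mul_div, mul_comm γ θ, mul_div_mul_left _ _ hθ]

lemma one_add_mul_one_sub_minimizer (hd : 1 + θ * (γ - 1) ≠ 0) :
    1 + (γ - 1) * (1 - minimizer γ θ) = γ / (1 + θ * (γ - 1)) := by
  rw [one_sub_minimizer hd, eq_div_iff hd, add_mul, mul_div_assoc', div_mul_cancel₀ _ hd]
  ring

theorem objective_minimizer (hγ : 0 < γ) (hθ : θ ∈ Ioo (0 : ℝ) 1) :
    objective γ θ (minimizer γ θ) = (1 - θ) * log γ := by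
  obtain ⟨hθ₀, hθ₁⟩ := hθ
  have hd := (one_add_mul_sub_one_pos hγ hθ₀.le hθ₁).ne'
  rw [objective, div_one_sub_minimizer hθ₁.ne hd, div_minimizer hθ₀.ne',
    one_add_mul_one_sub_minimizer hd, log_div hd hγ.ne', log_div hγ.ne' hd]
  ring

end FlatteningHyperprior

open FlatteningHyperprior in
/-- For `γ ∈ (0,1)` and `π*(θ) = γθ/(1 + θ(γ−1))`, the optimal value
`J(π*(θ)) = log γ − θ·log γ = (1−θ)·log γ`, so `θ ↦ J(π*(θ))` is affine in `θ` with
derivative identically `−log γ` on `(0,1)`. -/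
theorem flattening_hyperprior_optimal_value (γ : ℝ) (hγ : γ ∈ Ioo (0 : ℝ) 1)
    (πs : ℝ → ℝ) (hπs : ∀ θ : ℝ, πs θ = γ * θ / (1 + θ * (γ - 1)))
    (F : ℝ → ℝ)
    (hF : ∀ θ : ℝ, F θ = (1 - θ) * Real.log ((1 - θ) / (1 - πs θ))
      + θ * Real.log (θ / πs θ) + Real.log (1 + (γ - 1) * (1 - πs θ))) :
    ∀ θ ∈ Ioo (0 : ℝ) 1,
      F θ = Real.log γ - θ * Real.log γ ∧
      F θ = (1 - θ) * Real.log γ ∧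
      HasDerivAt F (-(Real.log γ)) θ := by
  have hF_eq : ∀ θ ∈ Ioo (0 : ℝ) 1, F θ = (1 - θ) * log γ := fun θ hθ => by
    rw [hF, hπs, ← objective_minimizer hγ.1 hθ, objective, minimizer]
  intro θ hθ
  refine ⟨by rw [hF_eq θ hθ]; ring, hF_eq θ hθ, ?_⟩
  have h_affine : HasDerivAt (fun t : ℝ => (1 - t) * log γ) (-log γ) θ := by
    simpa using ((hasDerivAt_id θ).const_sub 1).mul_const (log γ)
  exact h_affine.congr_of_eventuallyEq <|
    Filter.eventually_of_mem (isOpen_Ioo.mem_nhds hθ) hF_eq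
end

section
/- Let q ≥ 1, λ > 0, C0 ∈ ℝ, γ ∈ (0,1), and let C1 : ℝ^q → ℝ be twice continuously differentiable with C1(0) = C0. Define L(w,θ) = θ·(C1(w) − C0 − log γ) + (λ/2)·‖w‖² on ℝ^q × [0,1]. Then L has no local minimizer (w*, θ*) with θ* ∈ (0,1); that is, every local minimum of L over ℝ^q × [0,1] has θ* = 0 or θ* = 1. -/
open Set

/-- For `λ > 0`, `γ ∈ (0,1)`, `C1` twice continuously differentiable with
`C1(0) = C0`, the objective `L(w,θ) = θ(C1(w) − C0 − log γ) + (λ/2)‖w‖²` has no local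
minimizer on `ℝ^q × [0,1]` with `θ* ∈ (0,1)`: every local minimum has `θ* = 0` or `θ* = 1`. -/
theorem no_interior_theta_local_min (q : ℕ) (hq : 1 ≤ q)
    (lam C0 γ : ℝ) (hlam : 0 < lam) (hγ : γ ∈ Ioo (0 : ℝ) 1)
    (C1 : EuclideanSpace ℝ (Fin q) → ℝ) (hC1 : ContDiff ℝ 2 C1)
    (hC10 : C1 0 = C0)
    (L : EuclideanSpace ℝ (Fin q) × ℝ → ℝ)
    (hL : ∀ (w : EuclideanSpace ℝ (Fin q)) (θ : ℝ),
      L (w, θ) = θ * (C1 w - C0 - Real.log γ) + lam / 2 * ‖w‖ ^ 2)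
    (ws : EuclideanSpace ℝ (Fin q)) (θs : ℝ) (hθs : θs ∈ Icc (0 : ℝ) 1)
    (hmin : IsLocalMinOn L (Set.univ ×ˢ Icc (0 : ℝ) 1) (ws, θs)) :
    θs = 0 ∨ θs = 1 := by
  by_contra hcon
  push_neg at hcon
  obtain ⟨h0, h1⟩ := hcon
  have hθ0 : 0 < θs := lt_of_le_of_ne hθs.1 (Ne.symm h0)
  have hθ1 : θs < 1 := lt_of_le_of_ne hθs.2 h1
  have hlogγ : Real.log γ < 0 := Real.log_neg hγ.1 hγ.2
  -- the constraint set is a neighborhood of (ws, θs)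
  have hnbhd : (Set.univ ×ˢ Icc (0 : ℝ) 1) ∈ nhds (ws, θs) :=
    prod_mem_nhds Filter.univ_mem (Icc_mem_nhds hθ0 hθ1)
  have hlm : IsLocalMin L (ws, θs) := hmin.isLocalMin hnbhd
  -- Step 1: A ws = 0
  have hψmin : IsLocalMin (fun θ : ℝ => L (ws, θ)) θs := by
    have hcont : ContinuousAt (fun θ : ℝ => ((ws, θ) : EuclideanSpace ℝ (Fin q) × ℝ)) θs := by
      fun_prop
    exact hcont.tendsto.eventually hlm
  have hψdiff : HasDerivAt (fun θ : ℝ => L (ws, θ)) (C1 ws - C0 - Real.log γ) θs := by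
    have : HasDerivAt (fun θ : ℝ => θ * (C1 ws - C0 - Real.log γ) + lam / 2 * ‖ws‖ ^ 2)
        (C1 ws - C0 - Real.log γ) θs := by
      simpa using ((hasDerivAt_id θs).mul_const (C1 ws - C0 - Real.log γ)).add_const
        (lam / 2 * ‖ws‖ ^ 2)
    exact this.congr_of_eventuallyEq (Filter.Eventually.of_forall fun θ => hL ws θ)
  have hA0 : C1 ws - C0 - Real.log γ = 0 := hψmin.hasDerivAt_eq_zero hψdiff
  -- extract a metric neighborhood
  obtain ⟨ε, hε, hball⟩ : ∃ ε > 0, ∀ p : EuclideanSpace ℝ (Fin q) × ℝ,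
      dist p (ws, θs) < ε → L (ws, θs) ≤ L p := by
    rcases Metric.eventually_nhds_iff.mp hlm with ⟨ε, hε, h⟩
    exact ⟨ε, hε, fun p hp => h hp⟩
  set δ : ℝ := min (θs / 2) (ε / 2) with hδdef
  have hδ0 : 0 < δ := lt_min (by linarith) (by linarith)
  have hδθ : δ < θs := lt_of_le_of_lt (min_le_left _ _) (by linarith)
  have hδε : δ < ε := lt_of_le_of_lt (min_le_right _ _) (by linarith)
  -- derivative of the curve t ↦ (1 - t) • ws
  have hc : HasDerivAt (fun t : ℝ => (1 - t) • ws) (-ws) 0 := by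
    have : HasDerivAt (fun t : ℝ => (1 - t) • ws) ((-1 : ℝ) • ws) 0 :=
      ((hasDerivAt_id (0 : ℝ)).const_sub 1).smul_const ws
    simpa using this
  have h00 : (1 - (0 : ℝ)) • ws = ws := by simp
  set a : ℝ := fderiv ℝ C1 ws (-ws) with ha
  have hF : HasDerivAt (fun t : ℝ => C1 ((1 - t) • ws)) a 0 := by
    have hfd : HasFDerivAt C1 (fderiv ℝ C1 ws) ((1 - (0 : ℝ)) • ws) := by
      rw [h00]
      exact (hC1.differentiable (by norm_num)).differentiableAt.hasFDerivAt
    exact hfd.comp_hasDerivAt 0 hc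
  -- derivative of the squared-norm part
  have hN : HasDerivAt (fun t : ℝ => (1 - t) ^ 2 * ‖ws‖ ^ 2) (-2 * ‖ws‖ ^ 2) 0 := by
    have h1 : HasDerivAt (fun t : ℝ => (1 - t) ^ 2)
        ((2 : ℕ) * (1 - (0 : ℝ)) ^ (2 - 1) * (-1)) 0 :=
      ((hasDerivAt_id (0 : ℝ)).const_sub 1).pow 2
    have := h1.mul_const (‖ws‖ ^ 2)
    simpa using this
  -- for any μ, derivative of t ↦ L ((1-t)•ws, μ) at 0
  have key : ∀ μ : ℝ, HasDerivAt (fun t : ℝ => L ((1 - t) • ws, μ))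
      (μ * a + lam / 2 * (-2 * ‖ws‖ ^ 2)) 0 := by
    intro μ
    have hG : HasDerivAt (fun t : ℝ =>
        μ * (C1 ((1 - t) • ws) - C0 - Real.log γ) + lam / 2 * ((1 - t) ^ 2 * ‖ws‖ ^ 2))
        (μ * a + lam / 2 * (-2 * ‖ws‖ ^ 2)) 0 :=
      (((hF.sub_const C0).sub_const (Real.log γ)).const_mul μ).add (hN.const_mul (lam / 2))
    refine hG.congr_of_eventuallyEq (Filter.Eventually.of_forall fun t => ?_)
    show L ((1 - t) • ws, μ) = _
    rw [hL]
    have : ‖(1 - t) • ws‖ ^ 2 = (1 - t) ^ 2 * ‖ws‖ ^ 2 := by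
      rw [norm_smul]; rw [mul_pow]; rw [Real.norm_eq_abs, sq_abs]
    rw [this]
  -- local min along the curve at θ = θs
  have hg : IsLocalMin (fun t : ℝ => L ((1 - t) • ws, θs)) 0 := by
    have hcont : ContinuousAt (fun t : ℝ =>
        (((1 - t) • ws, θs) : EuclideanSpace ℝ (Fin q) × ℝ)) 0 := by fun_prop
    have htd := hcont.tendsto
    rw [h00] at htd
    have h := htd.eventually hlm
    unfold IsLocalMin IsMinFilter
    filter_upwards [h] with t ht
    show L ((1 - (0:ℝ)) • ws, θs) ≤ _
    rw [h00]
    exact ht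
  have heq1 : θs * a + lam / 2 * (-2 * ‖ws‖ ^ 2) = 0 := hg.hasDerivAt_eq_zero (key θs)
  -- local min along the curve at θ = θs - δ
  have hh : IsLocalMin (fun t : ℝ => L ((1 - t) • ws, θs - δ)) 0 := by
    have h0val : L ((1 - (0 : ℝ)) • ws, θs - δ) = L (ws, θs) := by
      rw [h00, hL, hL, hA0]; ring
    have hsmall : ∀ᶠ t : ℝ in nhds 0, |t| * (‖ws‖ + 1) < ε := by
      have hpos : 0 < ε / (‖ws‖ + 1) := by positivity
      filter_upwards [Metric.ball_mem_nhds (0 : ℝ) hpos] with t ht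
      rw [Metric.mem_ball, Real.dist_eq, sub_zero] at ht
      have hw1 : 0 < ‖ws‖ + 1 := by positivity
      calc |t| * (‖ws‖ + 1) < ε / (‖ws‖ + 1) * (‖ws‖ + 1) := by
            apply mul_lt_mul_of_pos_right ht hw1
        _ = ε := by field_simp
    unfold IsLocalMin IsMinFilter
    filter_upwards [hsmall] with t ht
    show L ((1 - (0:ℝ)) • ws, θs - δ) ≤ L ((1 - t) • ws, θs - δ)
    rw [h0val]
    apply hball
    rw [Prod.dist_eq]
    apply max_lt
    · rw [dist_eq_norm]
      have : (1 - t) • ws - ws = (-t) • ws := by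
        rw [sub_smul, one_smul, neg_smul]; abel
      rw [this, norm_smul, Real.norm_eq_abs, abs_neg]
      calc |t| * ‖ws‖ ≤ |t| * (‖ws‖ + 1) := by
            apply mul_le_mul_of_nonneg_left (by linarith) (abs_nonneg t)
        _ < ε := ht
    · rw [Real.dist_eq]
      have : |θs - δ - θs| = δ := by rw [show θs - δ - θs = -δ by ring, abs_neg,
        abs_of_pos hδ0]
      rw [this]; exact hδε
  have heq2 : (θs - δ) * a + lam / 2 * (-2 * ‖ws‖ ^ 2) = 0 := hh.hasDerivAt_eq_zero (key (θs - δ))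
  -- conclude ws = 0
  have haz : a = 0 := by
    have : δ * a = 0 := by linarith
    rcases mul_eq_zero.mp this with h | h
    · exact absurd h (ne_of_gt hδ0)
    · exact h
  have hws0 : ‖ws‖ ^ 2 = 0 := by
    rw [haz] at heq1
    nlinarith
  have : ws = 0 := by
    have := pow_eq_zero_iff (n := 2) (by norm_num) |>.mp hws0
    exact norm_eq_zero.mp this
  rw [this, hC10] at hA0
  linarith
end

section
/- Let q ≥ 1, λ > 0, C0 ∈ ℝ, γ ∈ (0,1), and let C1 : ℝ^q → ℝ be continuous with C1(0) = C0. Define L(w,θ) = θ·(C1(w) − C0 − log γ) + (λ/2)·‖w‖² on ℝ^q × [0,1]. Then (w,θ) = (0,0) is a strict local minimizer of L on ℝ^q × [0,1]: there exists ε > 0 such that for all (w,θ) with ‖w‖ < ε, θ ∈ [0,1] and (w,θ) ≠ (0,0), it holds that L(w,θ) > L(0,0) = 0. -/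
open Set

/-- For `λ > 0`, `γ ∈ (0,1)`, `C1` continuous with `C1(0) = C0`, the point
`(w,θ) = (0,0)` is a strict local minimizer of
`L(w,θ) = θ(C1(w) − C0 − log γ) + (λ/2)‖w‖²` on `ℝ^q × [0,1]`:
there is `ε > 0` with `L(w,θ) > L(0,0) = 0` for all `(w,θ) ≠ (0,0)` with `‖w‖ < ε`,
`θ ∈ [0,1]`. -/
theorem pruned_layer_strict_local_min (q : ℕ) (hq : 1 ≤ q)
    (lam C0 γ : ℝ) (hlam : 0 < lam) (hγ : γ ∈ Ioo (0 : ℝ) 1)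
    (C1 : EuclideanSpace ℝ (Fin q) → ℝ) (hC1 : Continuous C1)
    (hC10 : C1 0 = C0)
    (L : EuclideanSpace ℝ (Fin q) × ℝ → ℝ)
    (hL : ∀ (w : EuclideanSpace ℝ (Fin q)) (θ : ℝ),
      L (w, θ) = θ * (C1 w - C0 - Real.log γ) + lam / 2 * ‖w‖ ^ 2) :
    L (0, 0) = 0 ∧
    ∃ ε > (0 : ℝ), ∀ (w : EuclideanSpace ℝ (Fin q)) (θ : ℝ),
      ‖w‖ < ε → θ ∈ Icc (0 : ℝ) 1 → (w, θ) ≠ (0, 0) → L (0, 0) < L (w, θ) := by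
  have hlog : Real.log γ < 0 := Real.log_neg hγ.1 hγ.2
  have hL00 : L (0, 0) = 0 := by simp [hL]
  refine ⟨hL00, ?_⟩
  -- continuity: find δ with ‖w‖ < δ → |C1 w - C0| < -log γ / 2
  have hcont : ContinuousAt C1 0 := hC1.continuousAt
  have hpos : 0 < -Real.log γ / 2 := by linarith
  obtain ⟨δ, hδ, hball⟩ := Metric.continuousAt_iff.mp hcont _ hpos
  refine ⟨δ, hδ, fun w θ hw hθ hne => ?_⟩
  rw [hL00, hL]
  have hdist : dist (C1 w) (C1 0) < -Real.log γ / 2 := by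
    apply hball
    simpa [dist_eq_norm] using hw
  rw [hC10, Real.dist_eq, abs_lt] at hdist
  have hA : 0 < C1 w - C0 - Real.log γ := by linarith
  have h1 : 0 ≤ θ * (C1 w - C0 - Real.log γ) := mul_nonneg hθ.1 hA.le
  have h2 : 0 ≤ lam / 2 * ‖w‖ ^ 2 := by positivity
  rcases eq_or_ne w 0 with hw0 | hw0
  · have hθ0 : θ ≠ 0 := by
      intro h; exact hne (by simp [hw0, h])
    have : 0 < θ := lt_of_le_of_ne hθ.1 (Ne.symm hθ0)
    have := mul_pos this hA
    nlinarith
  · have h3 : 0 < lam / 2 * ‖w‖ ^ 2 := by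
      have : 0 < ‖w‖ := norm_pos_iff.mpr hw0
      positivity
    linarith
end

section
/- Let q ≥ 1, λ > 0, C0 ∈ ℝ, γ ∈ (0,1), and let C1 : ℝ^q → ℝ be differentiable with C1(0) = C0; define A(w) = C1(w) − C0 − log γ, and define h(θ,g) by: h(θ,g) = −max(g,0) if θ = 0; h(θ,g) = max(−g,0) if θ = 1; h(θ,g) = 0 if 0 < θ < 1. Assume there exist constants η ≥ 0 and κ ≥ 0 with η + κ > 0 such that |wᵀ∇A(w)| ≤ η·‖w‖ and |C1(w) − C0| ≤ κ·‖w‖ for all w ∈ ℝ^q. Define the region 𝒜₀ = { (w,θ) ∈ ℝ^q × [0,1] : (1/2)‖w‖² + (1/2)θ² < (1/2)·min{ (−log γ/(κ+η))², 1 } }. Then for every (w,θ) ∈ 𝒜₀ with (w,θ) ≠ (0,0), the Lie derivative of Λ(w,θ) = (1/2)‖w‖² + (1/2)θ² along the projected flow ẇ = −θ·∇A(w) − λ·w, θ̇ = −A(w) − h(θ, A(w)) is strictly negative: wᵀ(−θ·∇A(w) − λ·w) + θ·(−A(w) − h(θ, A(w))) < 0. -/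
open Set
open scoped RealInnerProductSpace

/-- Under the bounds `|wᵀ∇A(w)| ≤ η‖w‖`, `|C1(w) − C0| ≤ κ‖w‖` with
`η + κ > 0`, on the region
`𝒜₀ = {(w,θ) ∈ ℝ^q × [0,1] : ½‖w‖² + ½θ² < ½·min((−log γ/(κ+η))², 1)}`
the Lie derivative of `Λ(w,θ) = ½‖w‖² + ½θ²` along the projected flow
`ẇ = −θ∇A(w) − λw`, `θ̇ = −A(w) − h(θ, A(w))` is strictly negative away from `(0,0)`. -/
theorem lyapunov_strict_decrease_on_region (q : ℕ) (hq : 1 ≤ q)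
    (lam C0 γ : ℝ) (hlam : 0 < lam) (hγ : γ ∈ Ioo (0 : ℝ) 1)
    (C1 : EuclideanSpace ℝ (Fin q) → ℝ) (hC1 : Differentiable ℝ C1)
    (hC10 : C1 0 = C0)
    (A : EuclideanSpace ℝ (Fin q) → ℝ)
    (hA : ∀ w, A w = C1 w - C0 - Real.log γ)
    (h : ℝ → ℝ → ℝ)
    (hdef : ∀ θ g : ℝ, h θ g =
      if θ = 0 then -(max g 0) else if θ = 1 then max (-g) 0 else 0)
    (η κ : ℝ) (hη : 0 ≤ η) (hκ : 0 ≤ κ) (hηκ : 0 < η + κ)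
    (hb1 : ∀ w : EuclideanSpace ℝ (Fin q), |⟪w, gradient A w⟫| ≤ η * ‖w‖)
    (hb2 : ∀ w : EuclideanSpace ℝ (Fin q), |C1 w - C0| ≤ κ * ‖w‖) :
    ∀ (w : EuclideanSpace ℝ (Fin q)) (θ : ℝ), θ ∈ Icc (0 : ℝ) 1 →
      (1 / 2) * ‖w‖ ^ 2 + (1 / 2) * θ ^ 2 <
        (1 / 2) * min ((-Real.log γ / (κ + η)) ^ 2) 1 →
      (w, θ) ≠ (0, 0) →
      ⟪w, -(θ • gradient A w) - lam • w⟫ + θ * (-(A w) - h θ (A w)) < 0 := by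
  intro w θ hθ hreg hne
  have hL : 0 < -Real.log γ := by
    have := Real.log_neg hγ.1 hγ.2; linarith
  have hκη : 0 < κ + η := by linarith
  have hmin1 : min ((-Real.log γ / (κ + η)) ^ 2) 1 ≤ (-Real.log γ / (κ + η)) ^ 2 :=
    min_le_left _ _
  have hmin2 : min ((-Real.log γ / (κ + η)) ^ 2) 1 ≤ 1 := min_le_right _ _
  have hwlt : ‖w‖ < -Real.log γ / (κ + η) := by
    have hpos : 0 < -Real.log γ / (κ + η) := div_pos hL hκη
    nlinarith [norm_nonneg w, sq_nonneg θ]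
  have hwL : (κ + η) * ‖w‖ < -Real.log γ := by
    have := (lt_div_iff₀ hκη).mp hwlt
    linarith
  have hθlt1 : θ < 1 := by nlinarith [sq_nonneg ‖w‖, hθ.1]
  have hip : ⟪w, -(θ • gradient A w) - lam • w⟫
      = -(θ * ⟪w, gradient A w⟫) - lam * ‖w‖ ^ 2 := by
    rw [inner_sub_right, inner_neg_right, inner_smul_right, inner_smul_right,
      real_inner_self_eq_norm_sq]
  rw [hip]
  rcases eq_or_lt_of_le hθ.1 with h0 | h0
  · -- θ = 0
    have hw0 : w ≠ 0 := by
      intro hw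
      exact hne (by rw [hw, ← h0])
    have : 0 < ‖w‖ := norm_pos_iff.mpr hw0
    rw [← h0]
    nlinarith [mul_pos hlam (pow_pos this 2)]
  · -- 0 < θ < 1
    have hh0 : h θ (A w) = 0 := by
      rw [hdef]
      simp [ne_of_gt h0, ne_of_lt hθlt1]
    rw [hh0]
    have h1 := (abs_le.mp (hb1 w)).1
    have h2 := (abs_le.mp (hb2 w)).1
    have hAw : A w = (C1 w - C0) - Real.log γ := hA w
    rw [hAw]
    nlinarith [mul_nonneg h0.le (by linarith : (0:ℝ) ≤ ⟪w, gradient A w⟫ + η * ‖w‖),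
      mul_nonneg h0.le (by linarith : (0:ℝ) ≤ (C1 w - C0) + κ * ‖w‖),
      mul_pos h0 (by linarith : (0:ℝ) < -Real.log γ - (κ + η) * ‖w‖),
      sq_nonneg ‖w‖]
end
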